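/- arXiv:2403.09582 — 2 statements merged into one kernel-verified Lean document; each statement's English description precedes it below -/
import Mathlib

section
/- If A is a finite commutative ring and P a Boolean algebra, then the multiplication defined on generators by (X ⊗ a)(Y ⊗ b) = (X ∩ Y) ⊗ (ab) is well-defined and turns P(A) into a commutative ring with unit 1 ⊗ 1. -/
/-! Both arguments of the product are handled by one universal property: an additive map out
of `P(A)` is a family `f X a` satisfying the defining relation. For fixed `(Y, b)` the family
`(X, a) ↦ (X ⊓ Y) ⊗ ab` satisfies it because `· ⊓ Y` commutes with `\` and `⊓` and `· * b` is
additive; the resulting right multiplications again satisfy it in `(Y, b)`, symmetrically.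
Commutativity, associativity and the unit law are then identities between (multi)additive maps,
which it suffices to check on generators, where they reduce to those of `⊓` and of `A`. -/

/-- The subgroup of relations defining `P(A)`. -/
def paRel (P A : Type) [BooleanAlgebra P] [AddCommGroup A] :
    AddSubgroup (FreeAbelianGroup (P × A)) :=
  AddSubgroup.closure
    {z | ∃ (X Y : P) (a b : A),
      z = FreeAbelianGroup.of (X, a) + FreeAbelianGroup.of (Y, b)
        - (FreeAbelianGroup.of (X \ Y, a) + FreeAbelianGroup.of (Y \ X, b)
            + FreeAbelianGroup.of (X ⊓ Y, a + b))}

/-- The abelian group `P(A)`. -/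
abbrev PA (P A : Type) [BooleanAlgebra P] [AddCommGroup A] : Type :=
  FreeAbelianGroup (P × A) ⧸ paRel P A

/-- The generator `X ⊗ a` of `P(A)`. -/
def tens {P A : Type} [BooleanAlgebra P] [AddCommGroup A] (X : P) (a : A) : PA P A :=
  QuotientAddGroup.mk (FreeAbelianGroup.of (X, a))

namespace PA

section Group

variable {P A M : Type} [BooleanAlgebra P] [AddCommGroup A] [AddCommGroup M]

theorem tens_add_tens (X Y : P) (a b : A) :
    tens X a + tens Y b = tens (X \ Y) a + tens (Y \ X) b + tens (X ⊓ Y) (a + b) :=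
  QuotientAddGroup.eq_iff_sub_mem.mpr (AddSubgroup.subset_closure ⟨X, Y, a, b, rfl⟩)

theorem addHom_ext {f g : PA P A →+ M} (h : ∀ X a, f (tens X a) = g (tens X a)) : f = g :=
  QuotientAddGroup.addMonoidHom_ext _ (FreeAbelianGroup.lift_ext _ _ fun p => h p.1 p.2)

def lift (f : P → A → M)
    (hf : ∀ X Y a b, f X a + f Y b = f (X \ Y) a + f (Y \ X) b + f (X ⊓ Y) (a + b)) :
    PA P A →+ M :=
  QuotientAddGroup.lift _ (FreeAbelianGroup.lift fun p => f p.1 p.2) <| by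
    refine (AddSubgroup.closure_le _).2 ?_
    rintro _ ⟨X, Y, a, b, rfl⟩
    simp only [SetLike.mem_coe, AddMonoidHom.mem_ker, map_sub, map_add,
      FreeAbelianGroup.lift_apply_of]
    exact sub_eq_zero.2 (hf X Y a b)

@[simp]
theorem lift_tens (f : P → A → M)
    (hf : ∀ X Y a b, f X a + f Y b = f (X \ Y) a + f (Y \ X) b + f (X ⊓ Y) (a + b))
    (X : P) (a : A) : lift f hf (tens X a) = f X a :=
  FreeAbelianGroup.lift_apply_of _ _

end Group

section Ring

variable {P A : Type} [BooleanAlgebra P]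

def mulRight [NonUnitalNonAssocRing A] (Y : P) (b : A) : PA P A →+ PA P A :=
  lift (fun X a => tens (X ⊓ Y) (a * b)) fun X X' a a' => by
    rw [tens_add_tens, ← inf_sdiff_distrib_right, ← inf_sdiff_distrib_right,
      inf_inf_inf_comm, inf_idem, add_mul]

def mul [NonUnitalNonAssocRing A] : PA P A →+ PA P A →+ PA P A :=
  AddMonoidHom.flip <| lift mulRight fun Y Y' b b' => by
    refine addHom_ext fun X a => ?_
    simp only [mulRight, AddMonoidHom.add_apply, lift_tens]
    rw [tens_add_tens, ← inf_sdiff_distrib_left, ← inf_sdiff_distrib_left,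
      inf_inf_inf_comm, inf_idem, mul_add]

@[simp]
theorem mul_tens_tens [NonUnitalNonAssocRing A] (X Y : P) (a b : A) :
    mul (tens X a) (tens Y b) = tens (X ⊓ Y) (a * b) := by
  simp [mul, mulRight]

theorem mul_flip [NonUnitalNonAssocCommRing A] :
    (mul : PA P A →+ PA P A →+ PA P A).flip = mul := by
  refine addHom_ext fun X a => addHom_ext fun Y b => ?_
  simp [inf_comm, _root_.mul_comm]

theorem mul_comm [NonUnitalNonAssocCommRing A] (x y : PA P A) : mul x y = mul y x :=
  DFunLike.congr_fun (DFunLike.congr_fun mul_flip y) x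

theorem mul_assoc [NonUnitalRing A] (x y z : PA P A) : mul (mul x y) z = mul x (mul y z) := by
  have h : mul.compr₂ mul = (AddMonoidHom.compHom.comp mul).compl₂ (mul : PA P A →+ _) := by
    refine addHom_ext fun X a => addHom_ext fun Y b => addHom_ext fun Z c => ?_
    simp [inf_assoc, _root_.mul_assoc]
  exact DFunLike.congr_fun (DFunLike.congr_fun (DFunLike.congr_fun h x) y) z

theorem mul_top_one [NonAssocRing A] : mul (tens ⊤ (1 : A)) = AddMonoidHom.id (PA P A) := by
  refine addHom_ext fun X a => ?_
  simp

end Ring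

end PA

theorem pa_commRing_structure_general (P A : Type) [BooleanAlgebra P] [CommRing A] :
    ∃ mul : PA P A → PA P A → PA P A,
      (∀ (X Y : P) (a b : A), mul (tens X a) (tens Y b) = tens (X ⊓ Y) (a * b)) ∧
      (∀ x y : PA P A, mul x y = mul y x) ∧
      (∀ x y z : PA P A, mul (mul x y) z = mul x (mul y z)) ∧
      (∀ x y z : PA P A, mul x (y + z) = mul x y + mul x z) ∧
      (∀ x y z : PA P A, mul (x + y) z = mul x z + mul y z) ∧
      (∀ x : PA P A, mul (tens ⊤ (1 : A)) x = x) :=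
  ⟨fun x y => PA.mul x y, PA.mul_tens_tens, PA.mul_comm, PA.mul_assoc,
    fun x => map_add (PA.mul x), fun x y => DFunLike.congr_fun (map_add PA.mul x y),
    DFunLike.congr_fun PA.mul_top_one⟩

/-- If `A` is a finite commutative ring and `P` a Boolean
algebra, then the multiplication determined on generators by
`(X ⊗ a)(Y ⊗ b) = (X ⊓ Y) ⊗ (ab)` is well defined and turns the abelian group
`P(A)` into a commutative ring with unit `1 ⊗ 1 = ⊤ ⊗ 1`. -/
theorem pa_commRing_structure (P A : Type) [BooleanAlgebra P] [CommRing A] [Finite A] :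
    ∃ mul : PA P A → PA P A → PA P A,
      (∀ (X Y : P) (a b : A), mul (tens X a) (tens Y b) = tens (X ⊓ Y) (a * b)) ∧
      (∀ x y : PA P A, mul x y = mul y x) ∧
      (∀ x y z : PA P A, mul (mul x y) z = mul x (mul y z)) ∧
      (∀ x y z : PA P A, mul x (y + z) = mul x y + mul x z) ∧
      (∀ x y z : PA P A, mul (x + y) z = mul x z + mul y z) ∧
      (∀ x : PA P A, mul (tens ⊤ (1 : A)) x = x) :=
  pa_commRing_structure_general P A
end

section
/- Shapiro's lemma, metric version: for a finite-index subgroup Λ ≤ Γ of a group Γ of finite type, the Shapiro isomorphism κ : H^i(BΛ, A) → H^i(BΓ, P^{Γ/Λ}(A)) is isometric (with the measures on BΛ obtained by equidistributing the fibers of the covering BΛ → BΓ and the normalized counting measure on P^{Γ/Λ}), and satisfies κ([c]|_Λ) = θ^{Γ/Λ}_*([c]) for all [c] ∈ H^i(BΓ, A). -/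
/-! Finite models of classifying spaces (see the paper, Section 2). -/

/-- The equivariant cochain data of a finite classifying space `BΓ`. -/
structure FinModel (G : Type) [Group G] where
  S : ℕ → Type
  [fin : ∀ i, Fintype (S i)]
  ν : ∀ i, S i → ℝ
  ν_pos : ∀ i x, 0 < ν i x
  ν_sum : ∀ i, ∑ x, ν i x = 1
  stencil : ∀ i, S (i + 1) → List (ℤ × G × S i)

attribute [instance] FinModel.fin

variable {G : Type} [Group G]

/-- The differential `δ : C^i(BΓ, M) → C^{i+1}(BΓ, M)`. -/
def deltaC (B : FinModel G) {M : Type} [AddCommGroup M] (ρ : G → M →+ M) {i : ℕ}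
    (c : B.S i → M) : B.S (i + 1) → M :=
  fun x => ((B.stencil i x).map fun t => t.1 • ρ t.2.1 (c t.2.2)).sum

noncomputable section

open scoped Classical

/-- The length of a cochain. -/
def cochNorm (B : FinModel G) {M : Type} (m : M → ℝ) {i : ℕ} (c : B.S i → M) : ℝ :=
  ∑ x, B.ν i x * m (c x)

variable {Γ : Type} [Group Γ] (Λ : Subgroup Γ) (A : Type) [AddCommGroup A]

/-- The coinduced module `P^{Γ/Λ}(A) ≅ map(Γ/Λ, A)` with the translation
action of `Γ`. -/
def rhoCoind : Γ → ((Γ ⧸ Λ) → A) →+ ((Γ ⧸ Λ) → A) := fun g =>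
  { toFun := fun f w => f (g⁻¹ • w)
    map_zero' := rfl
    map_add' := fun _ _ => rfl }

/-- The normalized counting length on `P^{Γ/Λ}(A) = map(Γ/Λ, A)` (measure of
the support). -/
def muCoind [Fintype (Γ ⧸ Λ)] (f : (Γ ⧸ Λ) → A) : ℝ :=
  (Finset.univ.filter fun w => f w ≠ 0).card / Fintype.card (Γ ⧸ Λ)

/-- The differential of the finite covering model `BΛ = EΓ/Λ` of the
classifying space of `Λ`, on `A`-valued cochains indexed by
`BΓ(i) × Γ/Λ`. -/
def deltaCov (B : FinModel Γ) {i : ℕ} (c : B.S i × (Γ ⧸ Λ) → A) :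
    B.S (i + 1) × (Γ ⧸ Λ) → A :=
  fun p => ((B.stencil i p.1).map fun t => t.1 • c (t.2.2, t.2.1⁻¹ • p.2)).sum

/-- The length of an `A`-valued cochain on the covering model `BΛ`, for the
fiberwise-equidistributed measures. -/
def covNorm (B : FinModel Γ) [Fintype (Γ ⧸ Λ)] {i : ℕ}
    (c : B.S i × (Γ ⧸ Λ) → A) : ℝ :=
  ∑ x, ∑ w, (B.ν i x / Fintype.card (Γ ⧸ Λ)) * (if c (x, w) ≠ 0 then 1 else 0)

/-- metric Shapiro lemma.  For a finite index subgroup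
`Λ ≤ Γ` of a group of finite type with finite classifying space `BΓ`, the
currying map `κ : C^i(BΛ, A) → C^i(BΓ, P^{Γ/Λ}(A))` is an additive bijection
intertwining the differentials — hence induces the Shapiro isomorphism
`H^i(BΛ, A) ≅ H^i(BΓ, P^{Γ/Λ}(A))` — which is isometric both on cochains and
on the quotient pseudometrics of cohomology classes, and which satisfies
`κ([c]|_Λ) = θ^{Γ/Λ}_*([c])` for every `A`-valued cochain `c` on `BΓ`. -/
theorem metric_shapiro (B : FinModel Γ) [Λ.FiniteIndex] [Fintype (Γ ⧸ Λ)] (i : ℕ) :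
    (Function.Bijective
      (fun (c : B.S i × (Γ ⧸ Λ) → A) => (fun x w => c (x, w) : B.S i → (Γ ⧸ Λ) → A))) ∧
    (∀ c c' : B.S i × (Γ ⧸ Λ) → A,
      (fun (x : B.S i) (w : Γ ⧸ Λ) => (c + c') (x, w)) =
        (fun x w => c (x, w)) + fun x w => c' (x, w)) ∧
    (∀ c : B.S i × (Γ ⧸ Λ) → A,
      (fun (x : B.S (i + 1)) (w : Γ ⧸ Λ) => deltaCov Λ A B c (x, w)) =
        deltaC B (rhoCoind Λ A) (fun x w => c (x, w))) ∧
    (∀ c : B.S i × (Γ ⧸ Λ) → A,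
      cochNorm B (muCoind Λ A) (fun x w => c (x, w)) = covNorm Λ A B c) ∧
    (∀ c : B.S (i + 1) × (Γ ⧸ Λ) → A,
      (⨅ b : B.S i × (Γ ⧸ Λ) → A, covNorm Λ A B (c - deltaCov Λ A B b)) =
        ⨅ b : B.S i → (Γ ⧸ Λ) → A,
          cochNorm B (muCoind Λ A)
            (fun x => (fun w => c (x, w)) - deltaC B (rhoCoind Λ A) b x)) ∧
    (∀ c : B.S i → A,
      (fun (x : B.S i) (w : Γ ⧸ Λ) => (fun p : B.S i × (Γ ⧸ Λ) => c p.1) (x, w)) =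
        fun x (_ : Γ ⧸ Λ) => c x) := by
  -- Part 3: intertwining the differentials
  have h3 : ∀ {j : ℕ} (c : B.S j × (Γ ⧸ Λ) → A),
      (fun (x : B.S (j + 1)) (w : Γ ⧸ Λ) => deltaCov Λ A B c (x, w)) =
        deltaC B (rhoCoind Λ A) (fun x w => c (x, w)) := by
    intro j c
    funext x w
    show ((B.stencil j x).map fun t => t.1 • c (t.2.2, t.2.1⁻¹ • w)).sum =
      (((B.stencil j x).map fun t =>
        t.1 • rhoCoind Λ A t.2.1 (fun w => c (t.2.2, w))).sum) w
    induction B.stencil j x with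
    | nil => rfl
    | cons h t ih =>
      simp only [List.map_cons, List.sum_cons, Pi.add_apply, Pi.smul_apply, ih]
      rfl
  -- Part 4: norms agree
  have h4 : ∀ {j : ℕ} (c : B.S j × (Γ ⧸ Λ) → A),
      cochNorm B (muCoind Λ A) (fun x w => c (x, w)) = covNorm Λ A B c := by
    intro j c
    unfold cochNorm covNorm muCoind
    refine Finset.sum_congr rfl fun x _ => ?_
    rw [← Finset.mul_sum, Finset.sum_boole]
    ring
  refine ⟨?_, fun _ _ => rfl, fun c => h3 c, fun c => h4 c, ?_, fun _ => rfl⟩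
  · exact (Equiv.curry _ _ _).bijective
  · intro c
    rw [← Equiv.iInf_comp (Equiv.curry (B.S i) (Γ ⧸ Λ) A).symm]
    refine iInf_congr fun b => ?_
    show covNorm Λ A B (c - deltaCov Λ A B (Function.uncurry b)) = _
    rw [← h4 (c - deltaCov Λ A B (Function.uncurry b))]
    congr 1
    funext x w
    have hw := congrFun (congrFun (h3 (Function.uncurry b)) x) w
    show (c - deltaCov Λ A B (Function.uncurry b)) (x, w) =
      ((fun w => c (x, w)) - deltaC B (rhoCoind Λ A) b x) w
    simp only [Pi.sub_apply]
    rw [hw]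
    rfl
end
end
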